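/- arXiv:math/0701714 — 2 statements merged into one kernel-verified Lean document; each statement's English description precedes it below -/
import Mathlib

section
/- Every LC-loop is a middle nuclear square loop: if a loop satisfies (x·x)·(y·z) = (x·(x·y))·z for all x,y,z, then it satisfies x·((y·y)·z) = (x·(y·y))·z for all x,y,z. -/
/-- A loop: a set with multiplication, left division `ldiv` (written `\`),
right division `rdiv` (written `/`), and a two-sided identity `e`. -/
structure Loop (α : Type) where
  mul : α → α → α
  ldiv : α → α → α
  rdiv : α → α → α
  e : α
  mul_ldiv : ∀ a b, mul a (ldiv a b) = b
  rdiv_mul : ∀ a b, mul (rdiv b a) a = b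
  ldiv_mul : ∀ a b, ldiv a (mul a b) = b
  mul_rdiv : ∀ a b, rdiv (mul b a) a = b
  e_mul : ∀ a, mul e a = a
  mul_e : ∀ a, mul a e = a

/-!
Putting `z = e` in the LC identity gives left alternativity `(x·x)·y = x·(x·y)`, and the LC
identity then says that every square is left nuclear. Left alternativity and left nuclearity of
`t·t` yield the left inverse property `t⁻¹·(t·w) = w` with `t⁻¹ = t\e`. In a loop with the left
inverse property every left nuclear element `a` is also middle nuclear: writing `c = a\w⁻¹`, one
gets `w·(a·z) = c⁻¹·z` for all `z`, and `z = e` identifies `c⁻¹` with `w·a`.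
-/

namespace Loop

variable {α : Type} (L : Loop α)

def inv (t : α) : α := L.ldiv t L.e

def IsLC : Prop :=
  ∀ x y z, L.mul (L.mul x x) (L.mul y z) = L.mul (L.mul x (L.mul x y)) z

def HasLeftInverseProperty : Prop :=
  ∀ t w, L.mul (L.inv t) (L.mul t w) = w

def IsLeftNuclear (a : α) : Prop :=
  ∀ q r, L.mul a (L.mul q r) = L.mul (L.mul a q) r

variable {L}

theorem mul_left_cancel {a b c : α} (h : L.mul a b = L.mul a c) : b = c := by
  rw [← L.ldiv_mul a b, h, L.ldiv_mul]

theorem mul_inv (t : α) : L.mul t (L.inv t) = L.e :=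
  L.mul_ldiv t L.e

section LeftInverseProperty

variable (hL : L.HasLeftInverseProperty)
include hL

theorem inv_mul (t : α) : L.mul (L.inv t) t = L.e := by
  simpa only [L.mul_e] using hL t L.e

theorem inv_inv (t : α) : L.inv (L.inv t) = t := by
  rw [inv, ← inv_mul hL t, L.ldiv_mul]

theorem mul_inv_mul (t n : α) : L.mul t (L.mul (L.inv t) n) = n := by
  simpa only [inv_inv hL] using hL (L.inv t) n

theorem mul_assoc_of_isLeftNuclear {a : α} (ha : L.IsLeftNuclear a) (w z : α) :
    L.mul w (L.mul a z) = L.mul (L.mul w a) z := by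
  set c := L.ldiv a (L.inv w)
  have hc : L.mul a c = L.inv w := L.mul_ldiv a (L.inv w)
  have key : ∀ m, L.mul w (L.mul a m) = L.mul (L.inv c) m := fun m => by
    rw [← mul_inv_mul hL c m, ha, hc, mul_inv_mul hL w, mul_inv_mul hL c]
  have hwa : L.mul w a = L.inv c := by
    simpa only [L.mul_e] using key L.e
  rw [key, hwa]

end LeftInverseProperty

section LC

variable (h : L.IsLC)
include h

theorem mul_self_mul (p q : α) : L.mul (L.mul p p) q = L.mul p (L.mul p q) := by
  simpa only [L.mul_e] using h p q L.e

theorem isLeftNuclear_mul_self (p : α) : L.IsLeftNuclear (L.mul p p) := fun q r => by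
  rw [h, mul_self_mul h]

theorem hasLeftInverseProperty_of_isLC : L.HasLeftInverseProperty := by
  intro t w
  have hsq : L.mul (L.mul t t) (L.inv t) = t := by
    rw [mul_self_mul h, mul_inv, L.mul_e]
  have hdiv : L.ldiv (L.inv t) w = L.mul t w := by
    apply mul_left_cancel (a := t)
    calc L.mul t (L.ldiv (L.inv t) w)
        = L.mul (L.mul (L.mul t t) (L.inv t)) (L.ldiv (L.inv t) w) := by rw [hsq]
      _ = L.mul (L.mul t t) w := by rw [← isLeftNuclear_mul_self h, L.mul_ldiv]
      _ = L.mul t (L.mul t w) := mul_self_mul h t w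
  rw [← hdiv, L.mul_ldiv]

end LC

end Loop

theorem stmt_8 (α : Type) (L : Loop α) (h : ∀ x y z : α, L.mul (L.mul x x) (L.mul y z) = L.mul (L.mul x (L.mul x y)) z) :
    ∀ x y z : α, L.mul x (L.mul (L.mul y y) z) = L.mul (L.mul x (L.mul y y)) z := fun x y z =>
  Loop.mul_assoc_of_isLeftNuclear (Loop.hasLeftInverseProperty_of_isLC h)
    (Loop.isLeftNuclear_mul_self h y) x z
end

section
/- Every loop satisfying identity C14 is an LC-loop: if a loop satisfies x·(y·(y·z)) = (x·(y·y))·z for all x,y,z, then it satisfies (x·x)·(y·z) = (x·(x·y))·z for all x,y,z. -/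
namespace Loop

variable {α : Type} {L : Loop α}

local infixl:70 " ◇ " => L.mul
local infixl:70 " ⟍ " => L.ldiv
local infixl:70 " ⟋ " => L.rdiv

theorem eq_rdiv_of_mul_eq {a b c : α} (h : a ◇ b = c) : a = c ⟋ b := by
  rw [← h, mul_rdiv]

theorem eq_ldiv_of_mul_eq {a b c : α} (h : a ◇ b = c) : b = a ⟍ c := by
  rw [← h, ldiv_mul]

theorem rdiv_e (x : α) : x ⟋ L.e = x :=
  (eq_rdiv_of_mul_eq (L.mul_e x)).symm

variable (L) in
def LeftInverseProperty : Prop := ∀ x y : α, (L.e ⟋ x) ◇ (x ◇ y) = y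

variable (L) in
def C14 : Prop := ∀ x y z : α, x ◇ (y ◇ (y ◇ z)) = (x ◇ (y ◇ y)) ◇ z

variable (L) in
def LC : Prop := ∀ x y z : α, (x ◇ x) ◇ (y ◇ z) = (x ◇ (x ◇ y)) ◇ z

namespace LeftInverseProperty

variable (hL : L.LeftInverseProperty)
include hL

theorem ldiv_eq (x y : α) : x ⟍ y = (L.e ⟋ x) ◇ y := by
  rw [← L.mul_ldiv x y, hL, L.mul_ldiv]

theorem e_rdiv_rdiv (v u : α) : L.e ⟋ (v ⟋ u) = u ⟋ v := by
  apply eq_rdiv_of_mul_eq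
  simpa only [L.rdiv_mul] using hL (v ⟋ u) u

theorem rdiv_ldiv (v u w : α) : (v ⟋ u) ⟍ w = (u ⟋ v) ◇ w := by
  rw [hL.ldiv_eq, hL.e_rdiv_rdiv]

theorem mul_e_rdiv (x : α) : x ◇ (L.e ⟋ x) = L.e := by
  rw [← L.mul_e (L.e ⟋ x), ← hL.ldiv_eq, L.mul_ldiv]

end LeftInverseProperty

namespace C14

variable (h : L.C14)
include h

theorem mul_mul_self (y z : α) : y ◇ (y ◇ z) = (y ◇ y) ◇ z := by
  simpa only [L.e_mul] using h L.e y z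

theorem rdiv_mul_self_mul_mul (x y z : α) : (x ⟋ (y ◇ y)) ◇ (y ◇ (y ◇ z)) = x ◇ z := by
  rw [h, L.rdiv_mul]

theorem rdiv_mul_self_mul (y u : α) : (y ⟋ (y ◇ y)) ◇ (y ◇ u) = u := by
  simpa only [L.mul_ldiv] using h.rdiv_mul_self_mul_mul y y (y ⟍ u)

theorem rdiv_mul_self (y : α) : y ⟋ (y ◇ y) = L.e ⟋ y := by
  apply eq_rdiv_of_mul_eq
  simpa only [L.mul_e] using h.rdiv_mul_self_mul y L.e

theorem leftInverseProperty : L.LeftInverseProperty := fun y u => by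
  rw [← h.rdiv_mul_self, h.rdiv_mul_self_mul]

theorem rdiv_mul_self_mul_eq_mul_e_rdiv (x u : α) : (x ⟋ (u ◇ u)) ◇ u = x ◇ (L.e ⟋ u) := by
  simpa only [h.leftInverseProperty.mul_e_rdiv, L.mul_e] using
    h.rdiv_mul_self_mul_mul x u (L.e ⟋ u)

theorem rdiv_e_rdiv (v u : α) : v ⟋ (L.e ⟋ u) = (v ⟋ u) ◇ (u ◇ u) := by
  have hv : v ⟋ (L.e ⟋ u) ⟋ (u ◇ u) = v ⟋ u := by
    apply eq_rdiv_of_mul_eq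
    rw [h.rdiv_mul_self_mul_eq_mul_e_rdiv, L.rdiv_mul]
  rw [← hv, L.rdiv_mul]

theorem mul_self_rdiv_mul (y v w : α) : ((y ◇ y) ⟋ v) ◇ w = (y ◇ y) ◇ (v ⟍ w) := by
  rw [← h.mul_mul_self, ← h.leftInverseProperty.rdiv_ldiv, eq_comm]
  apply eq_ldiv_of_mul_eq
  rw [h.rdiv_mul_self_mul_mul, L.mul_ldiv]

theorem mul_self_mul_eq_rdiv (y u : α) : (y ◇ y) ◇ u = (y ◇ y) ⟋ (L.e ⟋ u) := by
  rw [h.rdiv_e_rdiv, h.mul_self_rdiv_mul, L.ldiv_mul]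

theorem mul_self_mul_mul (y u z : α) : ((y ◇ y) ◇ u) ◇ z = (y ◇ y) ◇ (u ◇ z) := by
  rw [h.mul_self_mul_eq_rdiv, h.mul_self_rdiv_mul, h.leftInverseProperty.rdiv_ldiv, rdiv_e]

theorem lc : L.LC := fun x y z => by
  rw [h.mul_mul_self x y, h.mul_self_mul_mul]

end C14

end Loop

theorem stmt_10 (α : Type) (L : Loop α) (h : ∀ x y z : α, L.mul x (L.mul y (L.mul y z)) = L.mul (L.mul x (L.mul y y)) z) :
    ∀ x y z : α, L.mul (L.mul x x) (L.mul y z) = L.mul (L.mul x (L.mul x y)) z :=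
  Loop.C14.lc h
end
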